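/- The subgroup of ZW spanned by the elements x̃_J = Σ_{D̃(w) ⊆ J} w, for J ranging over nonempty proper subsets of Δ̃ = Δ ∪ {α_0}, is a left module over Solomon's descent algebra Sol(Φ) under the multiplication of ZW: for any J ⊆ Δ and any nonempty proper K ⊊ Δ̃, the product x_J · x̃_K is an integer linear combination of elements x̃_L. -/

import Mathlib

/-!
The coefficient of `w` in `x_J x̃_K` is the number of `v` with `D̃(v) ⊆ K` and `D(wv⁻¹) ⊆ J`,
i.e. with `wv⁻¹` the shortest element of its coset `wv⁻¹ W_I`, where `I = Δ \ J`; such an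
element is characterised by mapping `I` to positive roots, and every coset has exactly one.
If `D̃(w) = D̃(w')`, sending `v` to the unique `v' ∈ W_I v` with `w'v'⁻¹` shortest in its coset
matches the `v` counted for `w` with those counted for `w'`: for `γ ∈ Δ̃` with `vγ ∉ span I` the
sign of `vγ` is not changed by `W_I`, and otherwise the signs of `vγ` and `v'γ` are those of `wγ`
and `w'γ`, which agree. So the coefficients of `x_J x̃_K` only depend on `D̃(w)`, and the product is a combination
of the `ỹ_M = Σ_{D̃(w) = M} w`. Each `ỹ_M` is in turn a combination of the `x̃_L` by
inclusion–exclusion, using `x̃_∅ = 0`: affine descent sets are never empty.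
-/

open scoped RealInnerProductSpace Classical

noncomputable section

variable (V : Type*) [NormedAddCommGroup V] [InnerProductSpace ℝ V] [FiniteDimensional ℝ V]

/-- The orthogonal reflection through the hyperplane orthogonal to `β`. -/
def sRefl (β : V) : V ≃ₗᵢ[ℝ] V := Submodule.reflection ((ℝ ∙ β)ᗮ)

/-- `β` is a nonnegative linear combination of the elements of `Δ`. -/
def IsNonneg (Δ : Finset V) (β : V) : Prop :=
  ∃ c : V → ℝ, (∀ α, 0 ≤ c α) ∧ β = ∑ α ∈ Δ, c α • α

/-- Root system axioms with simple system `Δ`. -/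
structure IsRootSystem (Φ Δ : Finset V) : Prop where
  subset : Δ ⊆ Φ
  nonzero : (0 : V) ∉ Φ
  neg_mem : ∀ β ∈ Φ, -β ∈ Φ
  refl_mem : ∀ α ∈ Φ, ∀ β ∈ Φ, sRefl V α β ∈ Φ
  indep : LinearIndependent ℝ (fun α : Δ => (α : V))
  pos_or_neg : ∀ β ∈ Φ, IsNonneg V Δ β ∨ IsNonneg V Δ (-β)

/-- The Weyl group: the subgroup generated by the reflections in the roots. -/
def Weyl (Φ : Finset V) : Subgroup (V ≃ₗᵢ[ℝ] V) :=
  Subgroup.closure {g | ∃ β ∈ Φ, g = sRefl V β}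

/-- Length with respect to the simple reflections. -/
def len (Δ : Finset V) (w : V ≃ₗᵢ[ℝ] V) : ℕ :=
  sInf {k | ∃ l : List V, l.length = k ∧ (∀ α ∈ l, α ∈ Δ) ∧ (l.map (sRefl V)).prod = w}

/-- Descent set of `w`. -/
def Dset (Δ : Finset V) (w : V ≃ₗᵢ[ℝ] V) : Finset V :=
  Δ.filter fun α => IsNonneg V Δ (-(w α))

/-- `θ` is the highest root. -/
def IsHighest (Φ Δ : Finset V) (θ : V) : Prop :=
  θ ∈ Φ ∧ IsNonneg V Δ θ ∧ ∀ β ∈ Φ, IsNonneg V Δ β → IsNonneg V Δ (θ - β)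

def Crystallographic (Φ : Finset V) : Prop :=
  ∀ α ∈ Φ, ∀ β ∈ Φ, ∃ n : ℤ, 2 * (inner ℝ β α : ℝ) = (n : ℝ) * (inner ℝ α α : ℝ)

def IrreducibleSystem (Δ : Finset V) : Prop :=
  ∀ s ⊆ Δ, (∀ α ∈ s, ∀ β ∈ Δ, β ∉ s → (inner ℝ α β : ℝ) = 0) → s = ∅ ∨ s = Δ

/-- Affine descent set of `w`, relative to the highest root `θ`. -/
def Dtilde (Δ : Finset V) (θ : V) (w : V ≃ₗᵢ[ℝ] V) : Finset V :=
  (insert (-θ) Δ).filter fun α => IsNonneg V Δ (-(w α))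

/-- The descent-algebra basis element `x_J`. -/
def xJ (Φ Δ J : Finset V) : MonoidAlgebra ℤ (Weyl V Φ) :=
  ∑ᶠ w : Weyl V Φ, if Dset V Δ (w : V ≃ₗᵢ[ℝ] V) ⊆ J then MonoidAlgebra.single w 1 else 0

/-- The affine analogue `x̃_K`. -/
def xT (Φ Δ : Finset V) (θ : V) (K : Finset V) : MonoidAlgebra ℤ (Weyl V Φ) :=
  ∑ᶠ w : Weyl V Φ, if Dtilde V Δ θ (w : V ≃ₗᵢ[ℝ] V) ⊆ K then MonoidAlgebra.single w 1 else 0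

def yJ (Φ Δ J : Finset V) : MonoidAlgebra ℤ (Weyl V Φ) :=
  ∑ᶠ w : Weyl V Φ, if Dset V Δ (w : V ≃ₗᵢ[ℝ] V) = J then MonoidAlgebra.single w 1 else 0

def yT (Φ Δ : Finset V) (θ : V) (K : Finset V) : MonoidAlgebra ℤ (Weyl V Φ) :=
  ∑ᶠ w : Weyl V Φ, if Dtilde V Δ θ (w : V ≃ₗᵢ[ℝ] V) = K then MonoidAlgebra.single w 1 else 0

lemma Submodule.exists_eq_sum_smul_of_mem_span_image {ι M R : Type*} [Semiring R]
    [AddCommMonoid M] [Module R M] {v : ι → M} {s : Finset ι} {x : M}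
    (hx : x ∈ Submodule.span R (v '' s)) : ∃ c : ι → R, x = ∑ i ∈ s, c i • v i := by
  obtain ⟨l, hl, rfl⟩ := (Finsupp.mem_span_image_iff_linearCombination R).1 hx
  refine ⟨l, ?_⟩
  rw [Finsupp.linearCombination_apply]
  exact Finsupp.sum_of_support_subset l (by simpa using (Finsupp.mem_supported R l).1 hl) _
    fun _ _ => zero_smul R _

def Finset.nonemptySSubsets {α : Type*} [DecidableEq α] (s : Finset α) : Finset (Finset α) :=
  (s.powerset.erase ∅).erase s

lemma Finset.mem_nonemptySSubsets {α : Type*} [DecidableEq α] {s t : Finset α} :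
    t ∈ s.nonemptySSubsets ↔ t ⊆ s ∧ t ≠ ∅ ∧ t ≠ s := by
  simp only [nonemptySSubsets, mem_erase, mem_powerset]
  tauto

section GroupAlgebra

variable {G : Type*} [Fintype G]

lemma coeff_finsum_ite_single (P : G → Prop) [DecidablePred P] (g : G) :
    (∑ᶠ x : G, if P x then MonoidAlgebra.single x (1 : ℤ) else 0).coeff g =
      if P g then 1 else 0 := by
  rw [finsum_eq_sum_of_fintype, MonoidAlgebra.coeff_sum, Finset.sum_apply',
    Finset.sum_eq_single g (fun x _ hx => by split_ifs <;> simp [hx]) (by simp)]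
  split_ifs <;> simp

lemma coeff_finsum_ite_single_mul [Group G] (P Q : G → Prop) [DecidablePred P] [DecidablePred Q]
    (g : G) :
    ((∑ᶠ x : G, if P x then MonoidAlgebra.single x (1 : ℤ) else 0) *
        (∑ᶠ x : G, if Q x then MonoidAlgebra.single x (1 : ℤ) else 0)).coeff g =
      (Finset.univ.filter fun v => Q v ∧ P (g * v⁻¹)).card := by
  rw [MonoidAlgebra.coeff_mul_apply_right, Finsupp.sum_fintype _ _ (by simp)]
  simp only [coeff_finsum_ite_single, ← ite_and, mul_ite, mul_one, mul_zero]
  rw [Finset.sum_boole]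

end GroupAlgebra

section RootSystem

variable {V : Type*} [NormedAddCommGroup V] [InnerProductSpace ℝ V]

lemma sRefl_apply (β x : V) : sRefl V β x = x - (2 * ⟪β, x⟫ / ‖β‖ ^ 2) • β := by
  rw [sRefl, Submodule.reflection_orthogonal_apply, Submodule.reflection_singleton_apply]
  simp only [RCLike.ofReal_real_eq_id, id]
  module

lemma sRefl_self (β : V) : sRefl V β β = -β :=
  Submodule.reflection_orthogonalComplement_singleton_eq_neg β

lemma sRefl_mul_self (β : V) : sRefl V β * sRefl V β = 1 :=
  Submodule.reflection_mul_reflection _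

lemma sRefl_inv (β : V) : (sRefl V β)⁻¹ = sRefl V β :=
  Submodule.reflection_inv

lemma sRefl_sRefl (β x : V) : sRefl V β (sRefl V β x) = x :=
  Submodule.reflection_reflection _ x

lemma sRefl_apply_sub_mem_span (β x : V) : sRefl V β x - x ∈ ℝ ∙ β := by
  rw [sRefl_apply, sub_sub_cancel_left]
  exact Submodule.neg_mem _ (Submodule.smul_mem _ _ (Submodule.mem_span_singleton_self β))

lemma sRefl_smul {c : ℝ} (hc : c ≠ 0) (β : V) : sRefl V (c • β) = sRefl V β := by
  unfold sRefl
  congr 1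
  rw [Submodule.span_singleton_smul_eq (IsUnit.mk0 c hc)]

lemma sRefl_map_mul (u : V ≃ₗᵢ[ℝ] V) (β : V) : sRefl V (u β) * u = u * sRefl V β := by
  ext x
  simp [sRefl_apply, LinearIsometryEquiv.inner_map_map]


variable {Φ Δ I : Finset V} {θ : V}

namespace IsNonneg

lemma zero : IsNonneg V Δ 0 :=
  ⟨0, fun _ => le_rfl, by simp⟩

lemma add {x y : V} (hx : IsNonneg V Δ x) (hy : IsNonneg V Δ y) : IsNonneg V Δ (x + y) := by
  obtain ⟨c, hc, rfl⟩ := hx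
  obtain ⟨d, hd, rfl⟩ := hy
  exact ⟨c + d, fun α => add_nonneg (hc α) (hd α), by simp [add_smul, Finset.sum_add_distrib]⟩

lemma smul {t : ℝ} {x : V} (hx : IsNonneg V Δ x) (ht : 0 ≤ t) : IsNonneg V Δ (t • x) := by
  obtain ⟨c, hc, rfl⟩ := hx
  exact ⟨t • c, fun α => mul_nonneg ht (hc α), by simp [Finset.smul_sum, smul_smul]⟩

lemma of_mem {α : V} (hα : α ∈ Δ) : IsNonneg V Δ α :=
  ⟨Pi.single α 1, fun β => by by_cases hβ : β = α <;> simp [hβ],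
    by simp [Pi.single_apply, hα]⟩

lemma map {F : Type*} [FunLike F V V] [LinearMapClass F ℝ V V] {β : V} (hβ : IsNonneg V I β)
    (f : F) (hf : ∀ α ∈ I, IsNonneg V Δ (f α)) :
    IsNonneg V Δ (f β) := by
  obtain ⟨c, hc, rfl⟩ := hβ
  rw [map_sum]
  exact Finset.sum_induction _ _ (fun _ _ => add) zero fun α hα => by
    rw [map_smul]; exact smul (hf α hα) (hc α)

lemma mem_span {β : V} (hβ : IsNonneg V I β) : β ∈ Submodule.span ℝ (I : Set V) := by
  obtain ⟨c, -, rfl⟩ := hβ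
  exact Submodule.sum_mem _ fun α hα => Submodule.smul_mem _ _ (Submodule.subset_span hα)

end IsNonneg

lemma sRefl_mem_weyl {S : Finset V} {β : V} (hβ : β ∈ S) : sRefl V β ∈ Weyl V S :=
  Subgroup.subset_closure ⟨β, hβ, rfl⟩

@[elab_as_elim]
lemma weyl_induction {S : Finset V} {p : (g : V ≃ₗᵢ[ℝ] V) → g ∈ Weyl V S → Prop}
    (one : p 1 (one_mem _))
    (mul : ∀ β (hβ : β ∈ S) g hg, p g hg → p (sRefl V β * g) (mul_mem (sRefl_mem_weyl hβ) hg))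
    {g : V ≃ₗᵢ[ℝ] V} (hg : g ∈ Weyl V S) : p g hg := by
  induction hg using Subgroup.closure_induction_left with
  | one => exact one
  | mul_left x hx y hy ih => obtain ⟨β, hβ, rfl⟩ := hx; exact mul β hβ y hy ih
  | inv_mul_cancel x hx y hy ih =>
    obtain ⟨β, hβ, rfl⟩ := hx
    simpa only [sRefl_inv] using mul β hβ y hy ih

lemma weyl_mono {S T : Finset V} (hST : S ⊆ T) : Weyl V S ≤ Weyl V T :=
  Subgroup.closure_mono fun _ ⟨β, hβ, hg⟩ => ⟨β, hST hβ, hg⟩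

lemma exists_list_of_mem_weyl {S : Finset V} {g : V ≃ₗᵢ[ℝ] V} (hg : g ∈ Weyl V S) :
    ∃ l : List V, (∀ α ∈ l, α ∈ S) ∧ (l.map (sRefl V)).prod = g := by
  induction hg using weyl_induction with
  | one => exact ⟨[], by simp, rfl⟩
  | mul β hβ g _ ih =>
    obtain ⟨l, hl, rfl⟩ := ih
    exact ⟨β :: l, by simpa [hβ] using hl, by simp⟩

lemma list_prod_mem_weyl {S : Finset V} {l : List V} (hl : ∀ α ∈ l, α ∈ S) :
    (l.map (sRefl V)).prod ∈ Weyl V S :=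
  Subgroup.list_prod_mem _ fun _ hx => by
    obtain ⟨α, hα, rfl⟩ := List.mem_map.1 hx
    exact sRefl_mem_weyl (hl α hα)

lemma apply_sub_mem_span_of_mem_weyl {g : V ≃ₗᵢ[ℝ] V} (hg : g ∈ Weyl V I) (x : V) :
    g x - x ∈ Submodule.span ℝ (I : Set V) := by
  induction hg using weyl_induction with
  | one => simp
  | mul β hβ g _ ih =>
    have hspan : ℝ ∙ β ≤ Submodule.span ℝ (I : Set V) :=
      Submodule.span_mono (Set.singleton_subset_iff.2 hβ)
    rw [LinearIsometryEquiv.coe_mul, Function.comp_apply, ← sub_add_sub_cancel _ (g x)]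
    exact add_mem (hspan (sRefl_apply_sub_mem_span β (g x))) ih

lemma apply_mem_span_iff_of_mem_weyl {g : V ≃ₗᵢ[ℝ] V} (hg : g ∈ Weyl V I) (x : V) :
    g x ∈ Submodule.span ℝ (I : Set V) ↔ x ∈ Submodule.span ℝ (I : Set V) := by
  rw [← Submodule.sub_mem_iff_left _ (apply_sub_mem_span_of_mem_weyl hg x)]
  simp

/-- For `u ∈ W` this says that `u` is the shortest element of its coset `u W_I`, where
`W_I = Weyl V I`. -/
def PositiveOn (Δ I : Finset V) (u : V ≃ₗᵢ[ℝ] V) : Prop :=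
  ∀ α ∈ I, IsNonneg V Δ (u α)

def inversionsOn (Φ Δ I : Finset V) (u : V ≃ₗᵢ[ℝ] V) : Finset V :=
  Φ.filter fun β => β ∈ Submodule.span ℝ (I : Set V) ∧ IsNonneg V Δ β ∧ ¬ IsNonneg V Δ (u β)

lemma mem_inversionsOn {u : V ≃ₗᵢ[ℝ] V} {β : V} : β ∈ inversionsOn Φ Δ I u ↔
    β ∈ Φ ∧ β ∈ Submodule.span ℝ (I : Set V) ∧ IsNonneg V Δ β ∧ ¬ IsNonneg V Δ (u β) :=
  Finset.mem_filter

namespace IsRootSystem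

/-- Outside `I`, the coefficients of `x` and of `-y` are nonnegative and add up to zero, since
`x + (-y) ∈ span I`. -/
lemma isNonneg_of_sub_mem_span (h : IsRootSystem V Φ Δ) (hI : I ⊆ Δ) {x y : V}
    (hx : IsNonneg V Δ x) (hy : IsNonneg V Δ (-y))
    (hxy : y - x ∈ Submodule.span ℝ (I : Set V)) : IsNonneg V I x := by
  obtain ⟨c, hc, rfl⟩ := hx
  obtain ⟨d, hd, hdy⟩ := hy
  obtain ⟨f, hf, hfxy⟩ := Submodule.mem_span_finset.1 hxy
  have hf_zero : ∀ α ∉ I, f α = 0 := fun α hα => Function.notMem_support.1 fun h' => hα (hf h')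
  have hsum : ∑ α ∈ Δ, (c α + d α + f α) • α = 0 := by
    have hfΔ : ∑ α ∈ Δ, f α • α = ∑ α ∈ I, f α • α :=
      (Finset.sum_subset hI fun α _ hα => by rw [hf_zero α hα, zero_smul]).symm
    simp only [add_smul, Finset.sum_add_distrib, hfΔ, hfxy, ← hdy]
    abel
  refine ⟨c, hc, (Finset.sum_subset hI fun α hαΔ hαI => ?_).symm⟩
  have := (linearIndepOn_finset_iff (v := id)).1 h.indep _ hsum α hαΔ
  rw [hf_zero α hαI, add_zero] at this
  rw [show c α = 0 by linarith [hc α, hd α], zero_smul]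

lemma not_isNonneg_and_isNonneg_neg (h : IsRootSystem V Φ Δ) {β : V} (hβ : β ∈ Φ) :
    ¬ (IsNonneg V Δ β ∧ IsNonneg V Δ (-β)) := by
  rintro ⟨hpos, hneg⟩
  obtain ⟨c, -, hc⟩ := h.isNonneg_of_sub_mem_span (Finset.empty_subset Δ) hpos hneg
    (by simp)
  exact h.nonzero (by simpa [hc] using hβ)

lemma isNonneg_neg_iff (h : IsRootSystem V Φ Δ) {β : V} (hβ : β ∈ Φ) :
    IsNonneg V Δ (-β) ↔ ¬ IsNonneg V Δ β :=
  ⟨fun hneg hpos => h.not_isNonneg_and_isNonneg_neg hβ ⟨hpos, hneg⟩,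
    (h.pos_or_neg β hβ).resolve_left⟩

lemma isNonneg_restrict (h : IsRootSystem V Φ Δ) (hI : I ⊆ Δ) {β : V}
    (hβ : β ∈ Submodule.span ℝ (I : Set V)) (hpos : IsNonneg V Δ β) : IsNonneg V I β :=
  h.isNonneg_of_sub_mem_span hI (y := 0) hpos (by simpa using IsNonneg.zero)
    (by simpa using Submodule.neg_mem _ hβ)

lemma apply_mem_of_mem_weyl (h : IsRootSystem V Φ Δ) {g : V ≃ₗᵢ[ℝ] V} (hg : g ∈ Weyl V Φ)
    {β : V} (hβ : β ∈ Φ) : g β ∈ Φ := by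
  induction hg using weyl_induction with
  | one => exact hβ
  | mul γ hγ g _ ih => exact h.refl_mem γ hγ _ ih

lemma isNonneg_apply_of_notMem_span (h : IsRootSystem V Φ Δ) (hI : I ⊆ Δ)
    {g : V ≃ₗᵢ[ℝ] V} (hg : g ∈ Weyl V I) {β : V} (hβ : β ∈ Φ)
    (hout : β ∉ Submodule.span ℝ (I : Set V)) (hpos : IsNonneg V Δ β) :
    IsNonneg V Δ (g β) := by
  have hgβ := h.apply_mem_of_mem_weyl (weyl_mono (hI.trans h.subset) hg) hβ
  by_contra hneg
  exact hout (h.isNonneg_of_sub_mem_span hI hpos ((h.isNonneg_neg_iff hgβ).2 hneg)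
    (apply_sub_mem_span_of_mem_weyl hg β)).mem_span

lemma isNonneg_sRefl_or (h : IsRootSystem V Φ Δ) {α β : V} (hα : α ∈ Δ) (hβ : β ∈ Φ)
    (hpos : IsNonneg V Δ β) : IsNonneg V Δ (sRefl V α β) ∨ ∃ c : ℝ, 0 < c ∧ β = c • α := by
  refine or_iff_not_imp_left.2 fun hneg => ?_
  have hsβ := h.refl_mem α (h.subset hα) β hβ
  obtain ⟨c, hc, hβc⟩ := h.isNonneg_of_sub_mem_span (Finset.singleton_subset_iff.2 hα) hpos
    ((h.isNonneg_neg_iff hsβ).2 hneg) (by simpa using sRefl_apply_sub_mem_span α β)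
  rw [Finset.sum_singleton] at hβc
  refine ⟨c α, (hc α).lt_of_ne fun h0 => h.nonzero ?_, hβc⟩
  rw [← h0, zero_smul] at hβc
  exact hβc ▸ hβ

/-- `γ` is the letter at which the image of `α` under the suffixes of `l` turns negative: there
a positive root is made negative by `s_γ`, so it is a positive multiple of `γ`. -/
lemma exists_eq_append_cons_of_not_isNonneg (h : IsRootSystem V Φ Δ) {l : List V}
    (hl : ∀ γ ∈ l, γ ∈ Δ) {α : V} (hα : α ∈ Δ)
    (hneg : ¬ IsNonneg V Δ ((l.map (sRefl V)).prod α)) :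
    ∃ l₁ γ l₂, l = l₁ ++ γ :: l₂ ∧
      sRefl V γ * (l₂.map (sRefl V)).prod = (l₂.map (sRefl V)).prod * sRefl V α := by
  induction l with
  | nil => exact absurd (IsNonneg.of_mem hα) (by simpa using hneg)
  | cons γ l ih =>
    have hlΔ : ∀ γ ∈ l, γ ∈ Δ := fun γ' hγ' => hl γ' (List.mem_cons_of_mem γ hγ')
    by_cases hpos : IsNonneg V Δ ((l.map (sRefl V)).prod α)
    · set u := (l.map (sRefl V)).prod
      have hu : u ∈ Weyl V Φ := weyl_mono h.subset (list_prod_mem_weyl hlΔ)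
      have hneg' : ¬ IsNonneg V Δ (sRefl V γ (u α)) := by simpa [u] using hneg
      obtain ⟨c, hc, huα⟩ := (h.isNonneg_sRefl_or (hl γ (by simp))
        (h.apply_mem_of_mem_weyl hu (h.subset hα)) hpos).resolve_left hneg'
      refine ⟨[], γ, l, rfl, ?_⟩
      rw [← sRefl_smul hc.ne' γ, ← huα, sRefl_map_mul]
    · obtain ⟨l₁, γ', l₂, rfl, hcomm⟩ := ih hlΔ hpos
      exact ⟨γ :: l₁, γ', l₂, rfl, hcomm⟩

lemma prod_map_sRefl_eq_one (h : IsRootSystem V Φ Δ) (hI : I ⊆ Δ) (l : List V)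
    (hl : ∀ γ ∈ l, γ ∈ I) (hpos : PositiveOn Δ I (l.map (sRefl V)).prod) :
    (l.map (sRefl V)).prod = 1 := by
  induction hn : l.length using Nat.strong_induction_on generalizing l with
  | _ n ih =>
    rcases l.eq_nil_or_concat with rfl | ⟨l', α, rfl⟩
    · simp
    simp only [List.concat_eq_append] at hl hpos hn ⊢
    have hα : α ∈ I := hl α (by simp)
    have hl' : ∀ γ ∈ l', γ ∈ I := fun γ hγ => hl γ (by simp [hγ])
    have hneg : ¬ IsNonneg V Δ ((l'.map (sRefl V)).prod α) := by
      intro hpos'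
      have hroot := h.apply_mem_of_mem_weyl (weyl_mono (hI.trans h.subset) (list_prod_mem_weyl hl'))
        (h.subset (hI hα))
      refine h.not_isNonneg_and_isNonneg_neg hroot ⟨hpos', ?_⟩
      simpa [sRefl_self] using hpos α hα
    obtain ⟨l₁, γ, l₂, rfl, hcomm⟩ :=
      h.exists_eq_append_cons_of_not_isNonneg (fun γ hγ => hI (hl' γ hγ)) (hI hα) hneg
    -- the letters `γ` and `α` cancel out of the word
    have hprod : ((l₁ ++ γ :: l₂ ++ [α]).map (sRefl V)).prod = ((l₁ ++ l₂).map (sRefl V)).prod := by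
      simp only [List.map_append, List.map_cons, List.map_nil, List.prod_append, List.prod_cons,
        List.prod_nil, mul_one, mul_assoc, hcomm, sRefl_mul_self]
    rw [hprod] at hpos ⊢
    exact ih _ (by simp only [List.length_append, List.length_cons] at hn ⊢; omega) _
      (fun γ hγ => hl γ (by simp at hγ ⊢; tauto)) hpos rfl

lemma eq_one_of_mem_weyl_of_positiveOn (h : IsRootSystem V Φ Δ) (hI : I ⊆ Δ)
    {g : V ≃ₗᵢ[ℝ] V} (hg : g ∈ Weyl V I) (hpos : PositiveOn Δ I g) : g = 1 := by
  obtain ⟨l, hl, rfl⟩ := exists_list_of_mem_weyl hg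
  exact h.prod_map_sRefl_eq_one hI l hl hpos

lemma isNonneg_apply_of_positiveOn (h : IsRootSystem V Φ Δ) (hI : I ⊆ Δ)
    {u : V ≃ₗᵢ[ℝ] V} (hu : PositiveOn Δ I u) {β : V}
    (hβI : β ∈ Submodule.span ℝ (I : Set V)) (hβ : IsNonneg V Δ β) : IsNonneg V Δ (u β) :=
  (h.isNonneg_restrict hI hβI hβ).map u hu

lemma isNonneg_apply_iff_of_positiveOn (h : IsRootSystem V Φ Δ) (hI : I ⊆ Δ)
    {u : V ≃ₗᵢ[ℝ] V} (hu : u ∈ Weyl V Φ) (hpos : PositiveOn Δ I u) {β : V} (hβ : β ∈ Φ)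
    (hβI : β ∈ Submodule.span ℝ (I : Set V)) : IsNonneg V Δ (u β) ↔ IsNonneg V Δ β := by
  refine ⟨fun huβ => ?_, h.isNonneg_apply_of_positiveOn hI hpos hβI⟩
  by_contra hneg
  have hu_neg := h.isNonneg_apply_of_positiveOn hI hpos (Submodule.neg_mem _ hβI)
    ((h.isNonneg_neg_iff hβ).2 hneg)
  rw [map_neg] at hu_neg
  exact h.not_isNonneg_and_isNonneg_neg (h.apply_mem_of_mem_weyl hu hβ) ⟨huβ, hu_neg⟩

lemma eq_of_positiveOn (h : IsRootSystem V Φ Δ) (hI : I ⊆ Δ) {u₁ u₂ : V ≃ₗᵢ[ℝ] V}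
    (hu₁ : u₁ ∈ Weyl V Φ) (hmem : u₁⁻¹ * u₂ ∈ Weyl V I) (hpos₁ : PositiveOn Δ I u₁)
    (hpos₂ : PositiveOn Δ I u₂) : u₁ = u₂ := by
  refine (inv_mul_eq_one.1 (h.eq_one_of_mem_weyl_of_positiveOn hI hmem fun α hα => ?_))
  have hroot := h.apply_mem_of_mem_weyl (weyl_mono (hI.trans h.subset) hmem) (h.subset (hI hα))
  have hspan := (apply_mem_span_iff_of_mem_weyl hmem α).2 (Submodule.subset_span hα)
  rw [← h.isNonneg_apply_iff_of_positiveOn hI hu₁ hpos₁ hroot hspan]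
  simpa using hpos₂ α hα

lemma card_inversionsOn_mul_sRefl_lt (h : IsRootSystem V Φ Δ) (hI : I ⊆ Δ)
    {u : V ≃ₗᵢ[ℝ] V} (hu : u ∈ Weyl V Φ) {α : V} (hα : α ∈ I) (huα : ¬ IsNonneg V Δ (u α)) :
    (inversionsOn Φ Δ I (u * sRefl V α)).card < (inversionsOn Φ Δ I u).card := by
  have hαΔ := hI hα
  have hsub : (inversionsOn Φ Δ I (u * sRefl V α)).image (sRefl V α) ⊆
      (inversionsOn Φ Δ I u).erase α := by
    intro x hx
    obtain ⟨β, hβ, rfl⟩ := Finset.mem_image.1 hx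
    obtain ⟨hβΦ, hβI, hβpos, hβneg⟩ := mem_inversionsOn.1 hβ
    have hsβpos : IsNonneg V Δ (sRefl V α β) := by
      refine (h.isNonneg_sRefl_or hαΔ hβΦ hβpos).resolve_right ?_
      rintro ⟨c, hc, rfl⟩
      apply hβneg
      rw [map_smul, LinearIsometryEquiv.coe_mul, Function.comp_apply, sRefl_self, map_neg]
      exact ((h.isNonneg_neg_iff (h.apply_mem_of_mem_weyl hu (h.subset hαΔ))).2 huα).smul hc.le
    refine Finset.mem_erase.2 ⟨fun hsβ => ?_, mem_inversionsOn.2 ⟨h.refl_mem _ (h.subset hαΔ) _ hβΦ,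
      (apply_mem_span_iff_of_mem_weyl (sRefl_mem_weyl hα) β).2 hβI, hsβpos, hβneg⟩⟩
    have hβα : β = -α := by rw [← sRefl_sRefl α β, hsβ, sRefl_self]
    exact h.not_isNonneg_and_isNonneg_neg hβΦ ⟨hβpos, by rw [hβα, neg_neg]; exact .of_mem hαΔ⟩
  have hαmem : α ∈ inversionsOn Φ Δ I u :=
    mem_inversionsOn.2 ⟨h.subset hαΔ, Submodule.subset_span hα, .of_mem hαΔ, huα⟩
  calc (inversionsOn Φ Δ I (u * sRefl V α)).card
      = ((inversionsOn Φ Δ I (u * sRefl V α)).image (sRefl V α)).card :=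
        (Finset.card_image_of_injective _ (sRefl V α).injective).symm
    _ ≤ ((inversionsOn Φ Δ I u).erase α).card := Finset.card_le_card hsub
    _ < (inversionsOn Φ Δ I u).card := Finset.card_erase_lt_of_mem hαmem

lemma exists_positiveOn_mul (h : IsRootSystem V Φ Δ) (hI : I ⊆ Δ) {u : V ≃ₗᵢ[ℝ] V}
    (hu : u ∈ Weyl V Φ) : ∃ g ∈ Weyl V I, PositiveOn Δ I (u * g) := by
  induction hn : (inversionsOn Φ Δ I u).card using Nat.strong_induction_on generalizing u with
  | _ n ih =>
    by_cases hpos : PositiveOn Δ I u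
    · exact ⟨1, one_mem _, by rwa [mul_one]⟩
    obtain ⟨α, hα, huα⟩ : ∃ α ∈ I, ¬ IsNonneg V Δ (u α) := by simpa [PositiveOn] using hpos
    have hsα := sRefl_mem_weyl hα
    obtain ⟨g, hg, hpos'⟩ := ih _ (hn ▸ h.card_inversionsOn_mul_sRefl_lt hI hu hα huα)
      (mul_mem hu (weyl_mono (hI.trans h.subset) hsα)) rfl
    exact ⟨sRefl V α * g, mul_mem hsα hg, by rwa [← mul_assoc]⟩


lemma mem_of_mem_insert_neg (h : IsRootSystem V Φ Δ) (hθ : IsHighest V Φ Δ θ) {γ : V}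
    (hγ : γ ∈ insert (-θ) Δ) : γ ∈ Φ := by
  rcases Finset.mem_insert.1 hγ with rfl | hγΔ
  exacts [h.neg_mem θ hθ.1, h.subset hγΔ]

lemma notMem_Dtilde_iff (h : IsRootSystem V Φ Δ) (hθ : IsHighest V Φ Δ θ)
    {w : V ≃ₗᵢ[ℝ] V} (hw : w ∈ Weyl V Φ) {γ : V} (hγ : γ ∈ insert (-θ) Δ) :
    γ ∉ Dtilde V Δ θ w ↔ IsNonneg V Δ (w γ) := by
  rw [Dtilde, Finset.mem_filter,
    h.isNonneg_neg_iff (h.apply_mem_of_mem_weyl hw (h.mem_of_mem_insert_neg hθ hγ))]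
  simp [hγ]

lemma Dtilde_subset_iff (h : IsRootSystem V Φ Δ) (hθ : IsHighest V Φ Δ θ)
    {w : V ≃ₗᵢ[ℝ] V} (hw : w ∈ Weyl V Φ) {K : Finset V} :
    Dtilde V Δ θ w ⊆ K ↔ ∀ γ ∈ insert (-θ) Δ, γ ∉ K → IsNonneg V Δ (w γ) := by
  refine ⟨fun hK γ hγ hγK => (h.notMem_Dtilde_iff hθ hw hγ).1 fun hmem => hγK (hK hmem),
    fun hK γ hmem => ?_⟩
  have hγ := Finset.mem_of_mem_filter γ hmem
  by_contra hγK
  exact (h.notMem_Dtilde_iff hθ hw hγ).2 (hK γ hγ hγK) hmem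

lemma Dset_subset_iff_positiveOn (h : IsRootSystem V Φ Δ) {u : V ≃ₗᵢ[ℝ] V}
    (hu : u ∈ Weyl V Φ) {J : Finset V} : Dset V Δ u ⊆ J ↔ PositiveOn Δ (Δ \ J) u := by
  have hroot {α : V} (hα : α ∈ Δ) := h.isNonneg_neg_iff (h.apply_mem_of_mem_weyl hu (h.subset hα))
  constructor
  · intro hJ α hα
    rw [Finset.mem_sdiff] at hα
    by_contra hneg
    exact hα.2 (hJ (Finset.mem_filter.2 ⟨hα.1, (hroot hα.1).2 hneg⟩))
  · intro hpos α hα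
    obtain ⟨hαΔ, hneg⟩ := Finset.mem_filter.1 hα
    by_contra hαJ
    exact (hroot hαΔ).1 hneg (hpos α (Finset.mem_sdiff.2 ⟨hαΔ, hαJ⟩))

lemma Dtilde_ne_empty (h : IsRootSystem V Φ Δ) (hθ : IsHighest V Φ Δ θ) {w : V ≃ₗᵢ[ℝ] V}
    (hw : w ∈ Weyl V Φ) : Dtilde V Δ θ w ≠ ∅ := by
  intro hempty
  have hpos := (h.Dtilde_subset_iff hθ hw (K := ∅)).1 hempty.subset
  have hwθ : IsNonneg V Δ (w θ) :=
    hθ.2.1.map w fun α hα => hpos α (Finset.mem_insert_of_mem hα) (Finset.notMem_empty α)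
  refine h.not_isNonneg_and_isNonneg_neg (h.apply_mem_of_mem_weyl hw hθ.1) ⟨hwθ, ?_⟩
  simpa using hpos (-θ) (Finset.mem_insert_self _ _) (Finset.notMem_empty _)

lemma Dtilde_ne_insert (h : IsRootSystem V Φ Δ) (hθ : IsHighest V Φ Δ θ) {w : V ≃ₗᵢ[ℝ] V}
    (hw : w ∈ Weyl V Φ) : Dtilde V Δ θ w ≠ insert (-θ) Δ := by
  intro hfull
  have hneg (γ : V) (hγ : γ ∈ insert (-θ) Δ) : IsNonneg V Δ (-(w γ)) :=
    (Finset.mem_filter.1 ((hfull.symm ▸ hγ : γ ∈ Dtilde V Δ θ w))).2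
  have hwθ : IsNonneg V Δ (-(w θ)) :=
    hθ.2.1.map (-(w.toLinearEquiv : V →ₗ[ℝ] V)) fun α hα => by
      simpa using hneg α (Finset.mem_insert_of_mem hα)
  refine h.not_isNonneg_and_isNonneg_neg (h.apply_mem_of_mem_weyl hw hθ.1) ⟨?_, hwθ⟩
  simpa using hneg (-θ) (Finset.mem_insert_self _ _)

lemma exists_Dtilde_subset_positiveOn (h : IsRootSystem V Φ Δ) (hθ : IsHighest V Φ Δ θ)
    (hI : I ⊆ Δ) {w w' v : V ≃ₗᵢ[ℝ] V} (hw : w ∈ Weyl V Φ) (hw' : w' ∈ Weyl V Φ)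
    (hv : v ∈ Weyl V Φ) (hD : Dtilde V Δ θ w = Dtilde V Δ θ w') {K : Finset V}
    (hvK : Dtilde V Δ θ v ⊆ K) (hwv : PositiveOn Δ I (w * v⁻¹)) :
    ∃ g ∈ Weyl V I, Dtilde V Δ θ (g * v) ⊆ K ∧ PositiveOn Δ I (w' * (g * v)⁻¹) := by
  have hWI := weyl_mono (hI.trans h.subset)
  have hu : w' * v⁻¹ ∈ Weyl V Φ := mul_mem hw' (inv_mem hv)
  obtain ⟨g, hg, hpos⟩ := h.exists_positiveOn_mul hI hu
  have hw'v : w' * (g⁻¹ * v)⁻¹ = w' * v⁻¹ * g := by group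
  refine ⟨g⁻¹, inv_mem hg, ?_, by rwa [hw'v]⟩
  rw [h.Dtilde_subset_iff hθ (mul_mem (hWI (inv_mem hg)) hv)]
  intro γ hγ hγK
  have hγΦ := h.mem_of_mem_insert_neg hθ hγ
  have hvγ := (h.Dtilde_subset_iff hθ hv).1 hvK γ hγ hγK
  have hvγΦ := h.apply_mem_of_mem_weyl hv hγΦ
  rw [LinearIsometryEquiv.coe_mul, Function.comp_apply]
  by_cases hvγI : v γ ∈ Submodule.span ℝ (I : Set V)
  · have hwγ : IsNonneg V Δ (w γ) := by
      simpa using h.isNonneg_apply_of_positiveOn hI hwv hvγI hvγ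
    have hw'γ : IsNonneg V Δ (w' γ) := by
      rw [← h.notMem_Dtilde_iff hθ hw' hγ, ← hD, h.notMem_Dtilde_iff hθ hw hγ]
      exact hwγ
    rw [← h.isNonneg_apply_iff_of_positiveOn hI (mul_mem hu (hWI hg)) hpos
      (h.apply_mem_of_mem_weyl (hWI (inv_mem hg)) hvγΦ)
      ((apply_mem_span_iff_of_mem_weyl (inv_mem hg) _).2 hvγI)]
    simpa using hw'γ
  · exact h.isNonneg_apply_of_notMem_span hI (inv_mem hg) hvγΦ hvγI hvγ

lemma card_le_card_of_Dtilde_eq (h : IsRootSystem V Φ Δ) (hθ : IsHighest V Φ Δ θ)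
    [Fintype (Weyl V Φ)] (J K : Finset V) {w w' : Weyl V Φ}
    (hD : Dtilde V Δ θ w = Dtilde V Δ θ w') :
    (Finset.univ.filter fun v : Weyl V Φ => Dtilde V Δ θ v ⊆ K ∧ Dset V Δ ↑(w * v⁻¹) ⊆ J).card ≤
      (Finset.univ.filter fun v : Weyl V Φ =>
        Dtilde V Δ θ v ⊆ K ∧ Dset V Δ ↑(w' * v⁻¹) ⊆ J).card := by
  have hI : Δ \ J ⊆ Δ := Finset.sdiff_subset
  have hWI := weyl_mono (hI.trans h.subset)
  have hDset (u : Weyl V Φ) := h.Dset_subset_iff_positiveOn u.2 (J := J)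
  -- `v ↦ g v` with `g ∈ W_I` and `w' (g v)⁻¹` shortest in its coset; at most one `v` maps to a
  -- given `v'`, by uniqueness of the shortest coset element
  refine Finset.card_le_card_of_forall_subsingleton
    (fun v v' : Weyl V Φ => ((v' * v⁻¹ : Weyl V Φ) : V ≃ₗᵢ[ℝ] V) ∈ Weyl V (Δ \ J)) ?_ ?_
  · intro v hv
    obtain ⟨hvK, hvJ⟩ := (Finset.mem_filter.1 hv).2
    obtain ⟨g, hg, hgK, hgpos⟩ :=
      h.exists_Dtilde_subset_positiveOn hθ hI w.2 w'.2 v.2 hD hvK ((hDset (w * v⁻¹)).1 hvJ)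
    refine ⟨⟨g * v, mul_mem (hWI hg) v.2⟩, Finset.mem_filter.2 ⟨Finset.mem_univ _, hgK, ?_⟩,
      by simpa using hg⟩
    exact (hDset _).2 (by simpa using hgpos)
  · intro v' _ v₁ ⟨hv₁, hr₁⟩ v₂ ⟨hv₂, hr₂⟩
    have hmem : ((w * v₁⁻¹ : Weyl V Φ) : V ≃ₗᵢ[ℝ] V)⁻¹ * ↑(w * v₂⁻¹) ∈ Weyl V (Δ \ J) := by
      have := mul_mem (inv_mem hr₁) hr₂
      simpa [mul_assoc] using this
    have := h.eq_of_positiveOn hI (w * v₁⁻¹).2 hmem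
      ((hDset _).1 (Finset.mem_filter.1 hv₁).2.2) ((hDset _).1 (Finset.mem_filter.1 hv₂).2.2)
    simpa using this

lemma Dtilde_mem_nonemptySSubsets (h : IsRootSystem V Φ Δ) (hθ : IsHighest V Φ Δ θ)
    {w : V ≃ₗᵢ[ℝ] V} (hw : w ∈ Weyl V Φ) :
    Dtilde V Δ θ w ∈ (insert (-θ) Δ).nonemptySSubsets :=
  Finset.mem_nonemptySSubsets.2
    ⟨Finset.filter_subset _ _, h.Dtilde_ne_empty hθ hw, h.Dtilde_ne_insert hθ hw⟩

end IsRootSystem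

section DescentClasses

variable [Fintype (Weyl V Φ)]

lemma coeff_xT (K : Finset V) (w : Weyl V Φ) :
    (xT V Φ Δ θ K).coeff w = if Dtilde V Δ θ w ⊆ K then 1 else 0 :=
  coeff_finsum_ite_single _ w

lemma coeff_yT (M : Finset V) (w : Weyl V Φ) :
    (yT V Φ Δ θ M).coeff w = if Dtilde V Δ θ w = M then 1 else 0 :=
  coeff_finsum_ite_single _ w

lemma coeff_xJ_mul_xT (J K : Finset V) (w : Weyl V Φ) :
    (xJ V Φ Δ J * xT V Φ Δ θ K).coeff w =
      (Finset.univ.filter fun v : Weyl V Φ =>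
        Dtilde V Δ θ v ⊆ K ∧ Dset V Δ ↑(w * v⁻¹) ⊆ J).card :=
  coeff_finsum_ite_single_mul _ _ w

lemma xT_eq_sum_yT (K : Finset V) : xT V Φ Δ θ K = ∑ M ∈ K.powerset, yT V Φ Δ θ M := by
  refine MonoidAlgebra.coeff_injective (Finsupp.ext fun w => ?_)
  simp [coeff_xT, coeff_yT, Finset.sum_apply']

namespace IsRootSystem

lemma yT_empty (h : IsRootSystem V Φ Δ) (hθ : IsHighest V Φ Δ θ) : yT V Φ Δ θ ∅ = 0 := by
  refine MonoidAlgebra.coeff_injective (Finsupp.ext fun w => ?_)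
  simp [coeff_yT, h.Dtilde_ne_empty hθ w.2]

lemma yT_mem_span (h : IsRootSystem V Φ Δ) (hθ : IsHighest V Φ Δ θ) {M : Finset V}
    (hM : M ∈ (insert (-θ) Δ).nonemptySSubsets) :
    yT V Φ Δ θ M ∈ Submodule.span ℤ (xT V Φ Δ θ '' (insert (-θ) Δ).nonemptySSubsets) := by
  induction M using Finset.strongInduction with
  | H M ih =>
    have hyT : yT V Φ Δ θ M = xT V Φ Δ θ M - ∑ L ∈ M.powerset.erase M, yT V Φ Δ θ L := by
      rw [xT_eq_sum_yT, ← Finset.add_sum_erase _ _ (Finset.mem_powerset_self M)]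
      abel
    rw [hyT]
    refine sub_mem (Submodule.subset_span ⟨M, hM, rfl⟩) (sum_mem fun L hL => ?_)
    obtain ⟨hLM, hLsub⟩ := Finset.mem_erase.1 hL
    rw [Finset.mem_powerset] at hLsub
    rcases eq_or_ne L ∅ with rfl | hL0
    · rw [h.yT_empty hθ]
      exact zero_mem _
    obtain ⟨hMsub, -, hMne⟩ := Finset.mem_nonemptySSubsets.1 hM
    refine ih L (Finset.ssubset_iff_subset_ne.2 ⟨hLsub, hLM⟩)
      (Finset.mem_nonemptySSubsets.2 ⟨hLsub.trans hMsub, hL0, ?_⟩)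
    rintro rfl
    exact hMne (hMsub.antisymm hLsub)

lemma mem_span_xT_of_coeff_eq (h : IsRootSystem V Φ Δ) (hθ : IsHighest V Φ Δ θ)
    {F : MonoidAlgebra ℤ (Weyl V Φ)}
    (hF : ∀ w w' : Weyl V Φ, Dtilde V Δ θ w = Dtilde V Δ θ w' → F.coeff w = F.coeff w') :
    F ∈ Submodule.span ℤ (xT V Φ Δ θ '' (insert (-θ) Δ).nonemptySSubsets) := by
  -- `a M` is the common coefficient of all `w` with `D̃(w) = M`
  set a := Function.extend (fun w : Weyl V Φ => Dtilde V Δ θ w) F.coeff 0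
  have ha (w : Weyl V Φ) : a (Dtilde V Δ θ w) = F.coeff w :=
    Function.FactorsThrough.extend_apply (fun w w' hD => hF w w' hD) 0 w
  have hF_eq : F = ∑ M ∈ (insert (-θ) Δ).nonemptySSubsets, a M • yT V Φ Δ θ M := by
    refine MonoidAlgebra.coeff_injective (Finsupp.ext fun w => ?_)
    simp only [MonoidAlgebra.coeff_sum, MonoidAlgebra.coeff_smul, Finset.sum_apply',
      Finsupp.smul_apply, coeff_yT, smul_eq_mul, mul_ite, mul_one, mul_zero, Finset.sum_ite_eq,
      if_pos (h.Dtilde_mem_nonemptySSubsets hθ w.2), ha]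
  rw [hF_eq]
  exact sum_mem fun M hM => Submodule.smul_mem _ _ (h.yT_mem_span hθ hM)

end IsRootSystem

end DescentClasses

end RootSystem

theorem affine_descents_module (Φ Δ : Finset V) (h : IsRootSystem V Φ Δ)
    (hfin : Finite (Weyl V Φ)) (θ : V) (hθ : IsHighest V Φ Δ θ)
    (J : Finset V)
    (K : Finset V) :
    ∃ c : Finset V → ℤ,
      xJ V Φ Δ J * xT V Φ Δ θ K =
        ∑ L ∈ ((insert (-θ) Δ).powerset.erase ∅).erase (insert (-θ) Δ), c L • xT V Φ Δ θ L := by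
  have := Fintype.ofFinite (Weyl V Φ)
  refine Submodule.exists_eq_sum_smul_of_mem_span_image (h.mem_span_xT_of_coeff_eq hθ ?_)
  intro w w' hD
  rw [coeff_xJ_mul_xT, coeff_xJ_mul_xT, Nat.cast_inj]
  exact le_antisymm (h.card_le_card_of_Dtilde_eq hθ J K hD)
    (h.card_le_card_of_Dtilde_eq hθ J K hD.symm)

end
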